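/- Let G = (V,E,≤) be an ordered, (k+2)-connected base graph and A = CFI(G,f). Let w be a tuple of at most k vertices of A and {u,v} ∈ E a base edge such that no entry of w has origin u, v, (u,v), or (v,u). Then the two edge vertices with origin (u,v) are in the same orbit of (A, w). -/

import Mathlib

section WalkT

variable {V : Type*} [DecidableEq V] {G : SimpleGraph V}

/-- The list of directed steps of a walk. -/
def walkSteps {x y : V} (c : G.Walk x y) : List (V × V) :=
  c.darts.map SimpleGraph.Dart.toProd

/-- The parity of the number of traversals of the edge `{a,b}` by a walk. -/
def walkT {x y : V} (c : G.Walk x y) (a b : V) : ZMod 2 :=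
  (((walkSteps c).count (a, b) + (walkSteps c).count (b, a) : ℕ) : ZMod 2)

lemma walkT_symm {x y : V} (c : G.Walk x y) (a b : V) : walkT c a b = walkT c b a := by
  simp [walkT, add_comm]

lemma walkSteps_cons {x z y : V} (h : G.Adj x z) (q : G.Walk z y) :
    walkSteps (SimpleGraph.Walk.cons h q) = (x, z) :: walkSteps q := by
  simp [walkSteps]

lemma not_mem_walkSteps_left {x y : V} (c : G.Walk x y) {a : V} (ha : a ∉ c.support) (b : V) :
    (a, b) ∉ walkSteps c := by
  intro hmem
  obtain ⟨d, hd, hde⟩ := List.mem_map.1 hmem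
  have := SimpleGraph.Walk.dart_fst_mem_support_of_mem_darts c hd
  rw [hde] at this
  exact ha this

lemma not_mem_walkSteps_right {x y : V} (c : G.Walk x y) {a : V} (ha : a ∉ c.support) (b : V) :
    (b, a) ∉ walkSteps c := by
  intro hmem
  obtain ⟨d, hd, hde⟩ := List.mem_map.1 hmem
  have := SimpleGraph.Walk.dart_snd_mem_support_of_mem_darts c hd
  rw [hde] at this
  exact ha this

lemma walkT_eq_zero_of_not_mem {x y : V} (c : G.Walk x y) {a : V} (ha : a ∉ c.support) (b : V) :
    walkT c a b = 0 := by
  rw [walkT, List.count_eq_zero_of_not_mem (not_mem_walkSteps_left c ha b),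
    List.count_eq_zero_of_not_mem (not_mem_walkSteps_right c ha b)]
  rfl

lemma walkT_eq_zero_of_not_adj {x y : V} (c : G.Walk x y) {a b : V} (h : ¬ G.Adj a b) :
    walkT c a b = 0 := by
  have h1 : (a, b) ∉ walkSteps c := by
    intro hmem
    obtain ⟨d, hd, hde⟩ := List.mem_map.1 hmem
    have := d.adj
    rw [hde] at this
    exact h this
  have h2 : (b, a) ∉ walkSteps c := by
    intro hmem
    obtain ⟨d, hd, hde⟩ := List.mem_map.1 hmem
    have := d.adj
    rw [hde] at this
    exact h this.symm
  rw [walkT, List.count_eq_zero_of_not_mem h1, List.count_eq_zero_of_not_mem h2]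
  rfl

lemma walkT_sum [Fintype V] {x y : V} (c : G.Walk x y) (a : V) :
    ∑ b, walkT c a b = (if a = x then 1 else 0) + (if a = y then 1 else 0) := by
  induction c with
  | nil =>
    simp only [walkT, walkSteps, SimpleGraph.Walk.darts_nil, List.map_nil, List.count_nil,
      Nat.cast_zero, add_zero, Finset.sum_const_zero]
    split_ifs <;> decide
  | @cons x z y h q ih =>
    have hstep : ∀ b, walkT (SimpleGraph.Walk.cons h q) a b =
        walkT q a b + (if (x, z) = (a, b) then 1 else 0) + (if (x, z) = (b, a) then 1 else 0) := by
      intro b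
      simp only [walkT, walkSteps_cons, List.count_cons, beq_iff_eq]
      split_ifs <;> push_cast <;> ring
    rw [Finset.sum_congr rfl (fun b _ => hstep b)]
    rw [Finset.sum_add_distrib, Finset.sum_add_distrib, ih]
    have h1 : ∑ b, (if (x, z) = (a, b) then (1 : ZMod 2) else 0)
        = if a = x then 1 else 0 := by
      by_cases hax : a = x
      · subst hax
        simp [Prod.ext_iff]
      · simp [Prod.ext_iff, show x ≠ a from fun hh => hax hh.symm, hax]
    have h2 : ∑ b, (if (x, z) = (b, a) then (1 : ZMod 2) else 0)
        = if a = z then 1 else 0 := by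
      by_cases haz : a = z
      · subst haz
        simp [Prod.ext_iff]
      · simp [Prod.ext_iff, show z ≠ a from fun hh => haz hh.symm, haz]
    rw [h1, h2]
    split_ifs <;> decide

end WalkT




variable {V : Type*}

/-- A gadget vertex of the CFI graph over base graph `G`: a base vertex `u` together with an
assignment `S : V → F₂` supported on the neighbors of `u` with even sum. -/
def GadgetVert [Fintype V] (G : SimpleGraph V) : Type _ :=
  {p : V × (V → ZMod 2) // (∀ w, ¬ G.Adj p.1 w → p.2 w = 0) ∧ ∑ w, p.2 w = 0}

/-- An edge vertex of the CFI graph: a directed base edge (its origin) and an index in `F₂`. -/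
def EdgeVert (G : SimpleGraph V) : Type _ :=
  {e : V × V // G.Adj e.1 e.2} × ZMod 2

/-- The vertices of the CFI graph over `G`. -/
def CFIVert [Fintype V] (G : SimpleGraph V) : Type _ :=
  GadgetVert G ⊕ EdgeVert G

/-- Adjacency of the CFI graph `CFI(G, f)`: a gadget vertex `(u, S)` is adjacent to the edge
vertex with origin `(u, v)` and index `S v`; the edge vertices with origins `(u, v)` and
`(v, u)` and indices `i`, `j` are matched iff `i + j = f {u,v}`. -/
def CFIAdj [Fintype V] (G : SimpleGraph V) (f : Sym2 V → ZMod 2) :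
    CFIVert G → CFIVert G → Prop
  | Sum.inl g, Sum.inr e => g.val.1 = e.1.val.1 ∧ g.val.2 e.1.val.2 = e.2
  | Sum.inr e, Sum.inl g => g.val.1 = e.1.val.1 ∧ g.val.2 e.1.val.2 = e.2
  | Sum.inr e, Sum.inr e' =>
      e.1.val.1 = e'.1.val.2 ∧ e.1.val.2 = e'.1.val.1 ∧
        e.2 + e'.2 = f s(e.1.val.1, e.1.val.2)
  | _, _ => False

/-- The CFI graph `CFI(G, f)`. -/
def CFIGraph [Fintype V] (G : SimpleGraph V) (f : Sym2 V → ZMod 2) :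
    SimpleGraph (CFIVert G) :=
  SimpleGraph.fromRel (CFIAdj G f)

/-- The origin of a CFI vertex: the base vertex of a gadget vertex, or the directed base edge
of an edge vertex. -/
def CFIorigin [Fintype V] (G : SimpleGraph V) : CFIVert G → V ⊕ (V × V)
  | Sum.inl g => Sum.inl g.val.1
  | Sum.inr e => Sum.inr e.1.val


section Twist

variable {V : Type*}

lemma zmod2_add_self (r : ZMod 2) : r + r = 0 := by
  fin_cases r <;> rfl

/-- Twisting map on CFI vertices along an even edge-set `t`. -/
def twistFun [Fintype V] (G : SimpleGraph V) (t : V → V → ZMod 2)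
    (hadj : ∀ a b, ¬ G.Adj a b → t a b = 0) (hsum : ∀ a, ∑ b, t a b = 0) :
    CFIVert G → CFIVert G
  | Sum.inl g => Sum.inl ⟨(g.val.1, fun b => g.val.2 b + t g.val.1 b), by
      refine ⟨fun b hb => ?_, ?_⟩
      · show g.val.2 b + t g.val.1 b = 0
        rw [g.prop.1 b hb, hadj _ _ hb, add_zero]
      · show ∑ b, (g.val.2 b + t g.val.1 b) = 0
        rw [Finset.sum_add_distrib, g.prop.2, hsum, add_zero]⟩
  | Sum.inr e => Sum.inr (e.1, e.2 + t e.1.val.1 e.1.val.2)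

lemma twistFun_involutive [Fintype V] (G : SimpleGraph V) (t : V → V → ZMod 2)
    (hadj : ∀ a b, ¬ G.Adj a b → t a b = 0) (hsum : ∀ a, ∑ b, t a b = 0) :
    Function.Involutive (twistFun G t hadj hsum) := by
  intro x
  rcases x with g | e
  · show Sum.inl _ = _
    congr 1
    apply Subtype.ext
    apply Prod.ext
    · rfl
    · funext b
      show g.val.2 b + t g.val.1 b + t g.val.1 b = g.val.2 b
      rw [add_assoc, zmod2_add_self, add_zero]
  · show Sum.inr (e.1, e.2 + t e.1.val.1 e.1.val.2 + t e.1.val.1 e.1.val.2) = Sum.inr e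
    rw [add_assoc, zmod2_add_self, add_zero]
    rfl

lemma twistFun_cfiAdj [Fintype V] (G : SimpleGraph V) (f : Sym2 V → ZMod 2)
    (t : V → V → ZMod 2)
    (hsym : ∀ a b, t a b = t b a)
    (hadj : ∀ a b, ¬ G.Adj a b → t a b = 0) (hsum : ∀ a, ∑ b, t a b = 0)
    (x y : CFIVert G) (h : CFIAdj G f x y) :
    CFIAdj G f (twistFun G t hadj hsum x) (twistFun G t hadj hsum y) := by
  rcases x with g | e <;> rcases y with g' | e'
  · exact h.elim
  · obtain ⟨h1, h2⟩ := h
    refine ⟨h1, ?_⟩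
    show g.val.2 e'.1.val.2 + t g.val.1 e'.1.val.2 = e'.2 + t e'.1.val.1 e'.1.val.2
    rw [h2, h1]
  · obtain ⟨h1, h2⟩ := h
    refine ⟨h1, ?_⟩
    show g'.val.2 e.1.val.2 + t g'.val.1 e.1.val.2 = e.2 + t e.1.val.1 e.1.val.2
    rw [h2, h1]
  · obtain ⟨h1, h2, h3⟩ := h
    refine ⟨h1, h2, ?_⟩
    show e.2 + t e.1.val.1 e.1.val.2 + (e'.2 + t e'.1.val.1 e'.1.val.2) = _
    have heq : t e'.1.val.1 e'.1.val.2 = t e.1.val.1 e.1.val.2 := by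
      rw [← h1, ← h2, hsym]
    rw [heq]
    calc e.2 + t e.1.val.1 e.1.val.2 + (e'.2 + t e.1.val.1 e.1.val.2)
        = e.2 + e'.2 + (t e.1.val.1 e.1.val.2 + t e.1.val.1 e.1.val.2) := by ring
      _ = f s(e.1.val.1, e.1.val.2) := by rw [zmod2_add_self, add_zero, h3]

/-- The twist along an even edge-set `t` is an automorphism of the CFI graph fixing origins. -/
lemma cfi_twist [Fintype V] (G : SimpleGraph V) (f : Sym2 V → ZMod 2)
    (t : V → V → ZMod 2)
    (hsym : ∀ a b, t a b = t b a)
    (hadj : ∀ a b, ¬ G.Adj a b → t a b = 0)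
    (hsum : ∀ a, ∑ b, t a b = 0) :
    ∃ φ : CFIGraph G f ≃g CFIGraph G f,
      (∀ x, CFIorigin G (φ x) = CFIorigin G x) ∧
      (∀ g : GadgetVert G, (∀ b, t g.val.1 b = 0) → φ (Sum.inl g) = Sum.inl g) ∧
      (∀ e : EdgeVert G, φ (Sum.inr e) = Sum.inr (e.1, e.2 + t e.1.val.1 e.1.val.2)) := by
  set F := twistFun G t hadj hsum with hF
  have hinv := twistFun_involutive G t hadj hsum
  have hinj : Function.Injective F := hinv.injective
  have hA := twistFun_cfiAdj G f t hsym hadj hsum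
  refine ⟨⟨hinv.toPerm, ?_⟩, ?_, ?_, ?_⟩
  · intro x y
    show (CFIGraph G f).Adj (F x) (F y) ↔ (CFIGraph G f).Adj x y
    constructor
    · rintro ⟨hne, hor⟩
      refine ⟨fun hxy => hne (by rw [hxy]), ?_⟩
      rcases hor with h | h
      · exact Or.inl (by have := hA _ _ h; rwa [hinv x, hinv y] at this)
      · exact Or.inr (by have := hA _ _ h; rwa [hinv x, hinv y] at this)
    · rintro ⟨hne, hor⟩
      exact ⟨fun hxy => hne (hinj hxy), hor.imp (hA _ _) (hA _ _)⟩
  · intro x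
    show CFIorigin G (F x) = CFIorigin G x
    rcases x with g | e
    · rfl
    · rfl
  · intro g hg
    show F (Sum.inl g) = Sum.inl g
    show Sum.inl _ = Sum.inl g
    congr 1
    apply Subtype.ext
    apply Prod.ext
    · rfl
    · funext b
      show g.val.2 b + t g.val.1 b = g.val.2 b
      rw [hg b, add_zero]
  · intro e
    rfl

end Twist

/-- Let `G` be an ordered `(k+2)`-connected base graph and `A = CFI(G,f)`.
Let `w` be a tuple of at most `k` vertices of `A` and `{u,v}` a base edge such that no entry
of `w` has origin `u`, `v`, `(u,v)`, or `(v,u)`. Then the two edge vertices with origin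
`(u,v)` are in the same orbit of `(A, w)` (orbits of color-preserving automorphisms;
as `G` is ordered, preserving colors means preserving origins). -/
theorem cfi_edge_vertices_same_orbit_of_connected {V : Type*} [Fintype V] [LinearOrder V]
    (G : SimpleGraph V) (k : ℕ)
    (hcard : k + 2 < Fintype.card V)
    (hconn : ∀ S : Set V, S.ncard ≤ k + 1 → (G.induce Sᶜ).Connected)
    (f : Sym2 V → ZMod 2)
    (u v : V) (huv : G.Adj u v)
    (m : ℕ) (hm : m ≤ k) (w : Fin m → CFIVert G)
    (hw : ∀ j, CFIorigin G (w j) ∉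
      ({Sum.inl u, Sum.inl v, Sum.inr (u, v), Sum.inr (v, u)} : Set (V ⊕ (V × V)))) :
    ∃ φ : CFIGraph G f ≃g CFIGraph G f,
      (∀ x, CFIorigin G (φ x) = CFIorigin G x) ∧
      (∀ j, φ (w j) = w j) ∧
      φ (Sum.inr (⟨(u, v), huv⟩, 0)) = Sum.inr (⟨(u, v), huv⟩, 1) := by
  classical
  have hune : u ≠ v := huv.ne
  -- the blocking vertex for each entry of `w`
  set pick : Fin m → V := fun j =>
    Sum.elim (fun g : GadgetVert G => g.val.1)
      (fun e : EdgeVert G =>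
        if e.1.val.1 = u ∨ e.1.val.1 = v then e.1.val.2 else e.1.val.1) (w j) with hpick
  have hpick_ne : ∀ j, pick j ≠ u ∧ pick j ≠ v := by
    intro j
    have hwj := hw j
    rcases hj : w j with g | e
    · rw [hj] at hwj
      simp only [CFIorigin, Set.mem_insert_iff, Set.mem_singleton_iff] at hwj
      push_neg at hwj
      simp only [hpick, hj, Sum.elim_inl]
      exact ⟨fun h => hwj.1 (by rw [h]), fun h => hwj.2.1 (by rw [h])⟩
    · rw [hj] at hwj
      simp only [CFIorigin, Set.mem_insert_iff, Set.mem_singleton_iff] at hwj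
      push_neg at hwj
      have hne1 : e.1.val ≠ (u, v) := fun h => hwj.2.2.1 (by rw [h])
      have hne2 : e.1.val ≠ (v, u) := fun h => hwj.2.2.2 (by rw [h])
      have hadj' : G.Adj e.1.val.1 e.1.val.2 := e.1.prop
      simp only [hpick, hj, Sum.elim_inr]
      by_cases hc : e.1.val.1 = u ∨ e.1.val.1 = v
      · rw [if_pos hc]
        rcases hc with hc | hc
        · refine ⟨fun h => hadj'.ne (by rw [hc, h]), fun h => hne1 ?_⟩
          rw [Prod.ext_iff]; exact ⟨hc, h⟩
        · refine ⟨fun h => hne2 ?_, fun h => hadj'.ne (by rw [hc, h])⟩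
          rw [Prod.ext_iff]; exact ⟨hc, h⟩
      · rw [if_neg hc]
        push_neg at hc
        exact hc
  set Sf : Finset V := Finset.image pick Finset.univ with hSf
  have hSfcard : Sf.card ≤ m := le_trans Finset.card_image_le (by simp)
  have huSf : u ∉ Sf := by
    intro h
    obtain ⟨j, _, hj⟩ := Finset.mem_image.1 h
    exact (hpick_ne j).1 hj
  have hvSf : v ∉ Sf := by
    intro h
    obtain ⟨j, _, hj⟩ := Finset.mem_image.1 h
    exact (hpick_ne j).2 hj
  set S1 : Set V := ↑Sf ∪ {u} with hS1def
  set S2 : Set V := ↑Sf ∪ {v} with hS2def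
  have hS1card : S1.ncard ≤ k + 1 := by
    refine le_trans (Set.ncard_union_le _ _) ?_
    rw [Set.ncard_coe_finset, Set.ncard_singleton]
    omega
  have hS2card : S2.ncard ≤ k + 1 := by
    refine le_trans (Set.ncard_union_le _ _) ?_
    rw [Set.ncard_coe_finset, Set.ncard_singleton]
    omega
  -- find a neighbor x of v avoiding S1
  have hvS1 : v ∈ S1ᶜ := by
    simp only [hS1def, Set.mem_compl_iff, Set.mem_union, Set.mem_singleton_iff]
    push_neg
    exact ⟨by exact_mod_cast hvSf, fun h => hune h.symm⟩
  have hS1c_big : 1 < S1ᶜ.ncard := by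
    have := Set.ncard_add_ncard_compl S1
    have hNat : Nat.card V = Fintype.card V := Nat.card_eq_fintype_card
    omega
  obtain ⟨a₀, b₀, ha₀, hb₀, hab₀⟩ := (Set.one_lt_ncard_iff (Set.toFinite _)).1 hS1c_big
  have hxex : ∃ y, y ∈ S1ᶜ ∧ y ≠ v := by
    by_cases h : a₀ = v
    · exact ⟨b₀, hb₀, fun hb => hab₀ (by rw [h, hb])⟩
    · exact ⟨a₀, ha₀, h⟩
  obtain ⟨y, hyS1, hyv⟩ := hxex
  have hreach1 := ((hconn S1 hS1card).preconnected ⟨v, hvS1⟩ ⟨y, hyS1⟩)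
  refine hreach1.elim fun p0 => ?_
  have hp0len : p0.length ≠ 0 := by
    intro h0
    have := SimpleGraph.Walk.eq_of_length_eq_zero h0
    exact hyv (congrArg Subtype.val this).symm
  set x : (S1ᶜ : Set V) := p0.getVert 1 with hxdef
  have hvx : G.Adj v ↑x := by
    have h := p0.adj_getVert_succ (i := 0) (by omega)
    rw [SimpleGraph.Walk.getVert_zero] at h
    simpa using h
  have hxS1 : (x : V) ∈ S1ᶜ := x.prop
  have hxu : (x : V) ≠ u := by
    intro h
    have hu1 : u ∈ S1 := Set.mem_union_right _ rfl
    rw [← h] at hu1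
    exact hxS1 hu1
  have hxv : (x : V) ≠ v := hvx.ne'
  have hxSf : (x : V) ∉ Sf := by
    intro h
    exact hxS1 (Set.mem_union_left _ h)
  -- path from x to u avoiding S2
  have hxS2 : (x : V) ∈ S2ᶜ := by
    simp only [hS2def, Set.mem_compl_iff, Set.mem_union, Set.mem_singleton_iff]
    push_neg
    exact ⟨by exact_mod_cast hxSf, hxv⟩
  have huS2 : u ∈ S2ᶜ := by
    simp only [hS2def, Set.mem_compl_iff, Set.mem_union, Set.mem_singleton_iff]
    push_neg
    exact ⟨by exact_mod_cast huSf, hune⟩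
  have hreach2 := ((hconn S2 hS2card).preconnected ⟨↑x, hxS2⟩ ⟨u, huS2⟩)
  refine hreach2.elim fun q0 => ?_
  set q : G.Walk ↑x u := q0.map (SimpleGraph.Embedding.induce S2ᶜ).toHom with hqdef
  have hq_support : ∀ a ∈ q.support, a ∈ S2ᶜ := by
    intro a ha
    replace ha : a ∈ (q0.map (SimpleGraph.Embedding.induce S2ᶜ).toHom).support := ha
    rw [SimpleGraph.Walk.support_map] at ha
    obtain ⟨b, _, hb⟩ := List.mem_map.1 ha
    rw [← hb]
    exact b.prop
  -- the closed walk
  set c : G.Walk u u := SimpleGraph.Walk.cons huv (SimpleGraph.Walk.cons hvx q) with hcdef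
  set t : V → V → ZMod 2 := walkT c with htdef
  have hsym : ∀ a b, t a b = t b a := fun a b => walkT_symm c a b
  have hadjt : ∀ a b, ¬ G.Adj a b → t a b = 0 := fun a b h => walkT_eq_zero_of_not_adj c h
  have hsumt : ∀ a, ∑ b, t a b = 0 := by
    intro a
    rw [htdef]
    rw [walkT_sum]
    split_ifs <;> decide
  have hvq : v ∉ q.support := by
    intro h
    have := hq_support v h
    rw [hS2def] at this
    exact this (Set.mem_union_right _ rfl)
  have hSf_not_support : ∀ a ∈ Sf, a ∉ c.support := by
    intro a ha hmem
    have hanu : a ≠ u := by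
      obtain ⟨j, _, hj⟩ := Finset.mem_image.1 ha
      exact hj ▸ (hpick_ne j).1
    have hanv : a ≠ v := by
      obtain ⟨j, _, hj⟩ := Finset.mem_image.1 ha
      exact hj ▸ (hpick_ne j).2
    rw [hcdef, SimpleGraph.Walk.support_cons, SimpleGraph.Walk.support_cons] at hmem
    simp only [List.mem_cons] at hmem
    rcases hmem with h | h | h
    · exact hanu h
    · exact hanv h
    · have := hq_support a h
      rw [hS2def] at this
      exact this (Set.mem_union_left _ ha)
  have htuv : t u v = 1 := by
    have h1 : (walkSteps q).count (u, v) = 0 :=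
      List.count_eq_zero_of_not_mem (not_mem_walkSteps_right q hvq u)
    have h2 : (walkSteps q).count (v, u) = 0 :=
      List.count_eq_zero_of_not_mem (not_mem_walkSteps_left q hvq u)
    have hsteps : walkSteps c = (u, v) :: (v, (x : V)) :: walkSteps q := by
      rw [hcdef, walkSteps_cons, walkSteps_cons]
    rw [htdef, walkT, hsteps]
    simp [List.count_cons, h1, h2, Prod.ext_iff, hune, hune.symm, hxu]
  obtain ⟨φ, horig, hgfix, hefix⟩ := cfi_twist G f t hsym hadjt hsumt
  refine ⟨φ, horig, ?_, ?_⟩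
  · intro j
    rcases hj : w j with g | e
    · apply hgfix
      intro b
      apply walkT_eq_zero_of_not_mem c
      apply hSf_not_support
      rw [hSf]
      apply Finset.mem_image.2
      exact ⟨j, Finset.mem_univ j, by simp only [hpick, hj, Sum.elim_inl]⟩
    · rw [hefix e]
      have hpj : pick j = if e.1.val.1 = u ∨ e.1.val.1 = v then e.1.val.2 else e.1.val.1 := by
        simp only [hpick, hj, Sum.elim_inr]
      have hpjSf : pick j ∈ Sf := Finset.mem_image.2 ⟨j, Finset.mem_univ j, rfl⟩
      have ht0 : t e.1.val.1 e.1.val.2 = 0 := by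
        by_cases hc : e.1.val.1 = u ∨ e.1.val.1 = v
        · rw [if_pos hc] at hpj
          rw [hsym]
          apply walkT_eq_zero_of_not_mem c
          apply hSf_not_support
          rw [← hpj]
          exact hpjSf
        · rw [if_neg hc] at hpj
          apply walkT_eq_zero_of_not_mem c
          apply hSf_not_support
          rw [← hpj]
          exact hpjSf
      rw [ht0, add_zero]
      rfl
  · have htarget := hefix ((⟨(u, v), huv⟩ : {e : V × V // G.Adj e.1 e.2}), (0 : ZMod 2))
    rw [htarget]
    simp [htuv]
    rfl
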